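/- arXiv:1612.01095 — 3 statements merged into one kernel-verified Lean document; each statement's English description precedes it below -/
import Mathlib

section
/- Let V be a finite set and let E be a set of elementary triplets over V satisfying ci0 and ci1. Define M1 = { I⊥J|K : there exist enumerations I = {i_1,…,i_m} and J = {j_1,…,j_n} such that i_s⊥j_t | {i_1,…,i_{s−1}} ∪ {j_1,…,j_{t−1}} ∪ K ∈ E for all 1 ≤ s ≤ m and 1 ≤ t ≤ n }. Then m(E) = M1. -/
variable {V : Type*} [DecidableEq V]

/-- ci0: for all distinct `i j` and `L ⊆ V \ {i, j}`, `i ⊥ j | L ∈ E ↔ j ⊥ i | L ∈ E`. -/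
def ci0 (E : Set (V × V × Finset V)) : Prop :=
  ∀ (i j : V) (L : Finset V), i ≠ j → i ∉ L → j ∉ L →
    ((i, j, L) ∈ E ↔ (j, i, L) ∈ E)

/-- ci1: for all distinct `i j k` and `L ⊆ V \ {i, j, k}`,
`(i ⊥ j | {k} ∪ L ∈ E and i ⊥ k | L ∈ E) ↔ (i ⊥ k | {j} ∪ L ∈ E and i ⊥ j | L ∈ E)`. -/
def ci1 (E : Set (V × V × Finset V)) : Prop :=
  ∀ (i j k : V) (L : Finset V), i ≠ j → i ≠ k → j ≠ k → i ∉ L → j ∉ L → k ∉ L →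
    (((i, j, insert k L) ∈ E ∧ (i, k, L) ∈ E) ↔
      ((i, k, insert j L) ∈ E ∧ (i, j, L) ∈ E))

/-- `m(E)`: the triplets `I ⊥ J | K` (with `I`, `J`, `K` pairwise disjoint and `I`, `J`
nonempty) such that `i ⊥ j | M' ∈ E` for all `i ∈ I`, `j ∈ J` and all `M'` with
`K ⊆ M' ⊆ (I \ {i}) ∪ (J \ {j}) ∪ K`. -/
def mMap (E : Set (V × V × Finset V)) : Set (Finset V × Finset V × Finset V) :=
  { T | Disjoint T.1 T.2.1 ∧ Disjoint T.1 T.2.2 ∧ Disjoint T.2.1 T.2.2 ∧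
      T.1.Nonempty ∧ T.2.1.Nonempty ∧
      ∀ i ∈ T.1, ∀ j ∈ T.2.1, ∀ M' : Finset V, T.2.2 ⊆ M' →
        M' ⊆ T.1.erase i ∪ T.2.1.erase j ∪ T.2.2 → (i, j, M') ∈ E }

/-- `M1`: the triplets `I ⊥ J | K` for which there exist enumerations `I = {i₁, …, i_m}`
and `J = {j₁, …, j_n}` such that
`i_s ⊥ j_t | {i₁, …, i_{s-1}} ∪ {j₁, …, j_{t-1}} ∪ K ∈ E` for all `s`, `t`. -/
def M1 (E : Set (V × V × Finset V)) : Set (Finset V × Finset V × Finset V) :=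
  { T | Disjoint T.1 T.2.1 ∧ Disjoint T.1 T.2.2 ∧ Disjoint T.2.1 T.2.2 ∧
      T.1.Nonempty ∧ T.2.1.Nonempty ∧
      ∃ li lj : List V, li.Nodup ∧ lj.Nodup ∧ li.toFinset = T.1 ∧ lj.toFinset = T.2.1 ∧
        ∀ s : Fin li.length, ∀ t : Fin lj.length,
          (li.get s, lj.get t,
            (li.take s.val).toFinset ∪ (lj.take t.val).toFinset ∪ T.2.2) ∈ E }

/-!
The inclusion `m(E) ⊆ M1` is immediate: in any enumeration the conditioning set of
`i_s ⊥ j_t` lies between `K` and `(I ∖ {i_s}) ∪ (J ∖ {j_t}) ∪ K`.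

Conversely, ci1 moves one variable at a time in and out of a conditioning set. If `j ⊥ a | K`
and `j ⊥ i | A ∪ {a} ∪ K` for all `i ∈ S`, `A ⊆ S ∖ {i}`, then raising the conditioning set
of `j ⊥ a` from `K` to `A ∪ K` and then removing `a` from that of `j ⊥ i` gives
`j ⊥ i | A ∪ K` for all `i ∈ S ∪ {a}`, `A ⊆ (S ∪ {a}) ∖ {i}`. Induction along the enumeration
of `I` upgrades, for each `j_t`, the chain `i_s ⊥ j_t` to all intermediate conditioning sets
inside `I`; after the symmetry ci0 the same induction along `J` yields every triplet required
by `m(E)`.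
-/

open Finset

section

variable {E : Set (V × V × Finset V)}

theorem ci0.mem_swap {α : Type*} {E : Set (α × α × Finset α)}
    (hE : ∀ T ∈ E, T.1 ≠ T.2.1 ∧ T.1 ∉ T.2.2 ∧ T.2.1 ∉ T.2.2)
    (h0 : ci0 E) {i j : α} {L : Finset α} (h : (i, j, L) ∈ E) : (j, i, L) ∈ E :=
  let ⟨hij, hi, hj⟩ := hE _ h
  (h0 i j L hij hi hj).mp h

theorem ci1.swap_insert (hE : ∀ T ∈ E, T.1 ≠ T.2.1 ∧ T.1 ∉ T.2.2 ∧ T.2.1 ∉ T.2.2)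
    (h1 : ci1 E) {i j k : V} {L : Finset V} (hj : (i, j, insert k L) ∈ E)
    (hk : (i, k, L) ∈ E) : (i, j, L) ∈ E ∧ (i, k, insert j L) ∈ E := by
  obtain ⟨hij, hiL, hjL⟩ := hE _ hj
  obtain ⟨hik, -, hkL⟩ := hE _ hk
  rw [mem_insert, not_or] at hiL hjL
  exact and_comm.mp ((h1 i j k L hij hik hjL.1 hiL.2 hjL.2 hkL).mp ⟨hj, hk⟩)

/-- The defining condition of `{j} ⊥ S | K ∈ m(E)`. -/
def ElemIndep (E : Set (V × V × Finset V)) (j : V) (S K : Finset V) : Prop :=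
  ∀ i ∈ S, ∀ A ⊆ S.erase i, (j, i, A ∪ K) ∈ E

theorem elemIndep_insert (hE : ∀ T ∈ E, T.1 ≠ T.2.1 ∧ T.1 ∉ T.2.2 ∧ T.2.1 ∉ T.2.2)
    (h1 : ci1 E) {j a : V} {S K : Finset V} (ha : (j, a, K) ∈ E)
    (hS : ElemIndep E j S (insert a K)) : ElemIndep E j (insert a S) K := by
  have hS' : ∀ i ∈ S, ∀ A ⊆ S.erase i, (j, i, insert a (A ∪ K)) ∈ E := fun i hi A hA => by
    simpa only [union_insert] using hS i hi A hA
  have ha_up : ∀ A ⊆ S, (j, a, A ∪ K) ∈ E := by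
    intro A hA
    induction A using Finset.induction_on with
    | empty => simpa using ha
    | insert k A hkA ih =>
      rw [insert_subset_iff] at hA
      have hk := hS' k hA.1 A (subset_erase.mpr ⟨hA.2, hkA⟩)
      simpa only [insert_union] using (ci1.swap_insert hE h1 hk (ih hA.2)).2
  have hS_down : ∀ i ∈ S, ∀ A ⊆ S.erase i, (j, i, A ∪ K) ∈ E := fun i hi A hA =>
    (ci1.swap_insert hE h1 (hS' i hi A hA) (ha_up A (hA.trans (erase_subset i S)))).1
  intro i hi A hA
  by_cases hia : i = a
  · subst hia
    exact ha_up A (hA.trans (erase_insert_subset i S))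
  have hiS : i ∈ S := mem_of_mem_insert_of_ne hi hia
  rw [erase_insert_of_ne (Ne.symm hia), subset_insert_iff] at hA
  by_cases haA : a ∈ A
  · simpa only [union_insert, ← insert_union, insert_erase haA] using hS i hiS _ hA
  · exact hS_down i hiS A (by rwa [erase_eq_of_notMem haA] at hA)

theorem elemIndep_of_chain (hE : ∀ T ∈ E, T.1 ≠ T.2.1 ∧ T.1 ∉ T.2.2 ∧ T.2.1 ∉ T.2.2)
    (h1 : ci1 E) {j : V} :
    ∀ {l : List V} {K : Finset V},
      (∀ s : Fin l.length, (j, l.get s, (l.take s).toFinset ∪ K) ∈ E) →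
      ElemIndep E j l.toFinset K
  | [], _, _ => fun i hi => by simp at hi
  | a :: l, K, hchain => by
    rw [List.toFinset_cons]
    exact elemIndep_insert hE h1 (by simpa using hchain ⟨0, by simp⟩)
      (elemIndep_of_chain hE h1 fun s => by simpa using hchain s.succ)

theorem List.Nodup.toFinset_take_subset_erase {l : List V} (hl : l.Nodup) (s : Fin l.length) :
    (l.take s).toFinset ⊆ l.toFinset.erase (l.get s) := by
  intro x hx
  obtain ⟨m, hm, rfl⟩ := List.mem_take_iff_getElem.mp (List.mem_toFinset.mp hx)
  refine mem_erase.mpr ⟨fun h => ?_, List.mem_toFinset.mpr (List.getElem_mem _)⟩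
  have := (hl.getElem_inj_iff).mp h
  omega

theorem mMap_subset_M1 : mMap E ⊆ M1 E := by
  rintro ⟨I, J, K⟩ ⟨hIJ, hIK, hJK, hI, hJ, h⟩
  refine ⟨hIJ, hIK, hJK, hI, hJ, I.toList, J.toList, I.nodup_toList, J.nodup_toList,
    I.toList_toFinset, J.toList_toFinset, fun s t => ?_⟩
  have hs := I.nodup_toList.toFinset_take_subset_erase s
  have ht := J.nodup_toList.toFinset_take_subset_erase t
  rw [toList_toFinset] at hs ht
  exact h _ (mem_toList.mp (List.get_mem _ _)) _ (mem_toList.mp (List.get_mem _ _)) _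
    subset_union_right (union_subset_union (union_subset_union hs ht) subset_rfl)

theorem M1_subset_mMap (hE : ∀ T ∈ E, T.1 ≠ T.2.1 ∧ T.1 ∉ T.2.2 ∧ T.2.1 ∉ T.2.2)
    (h0 : ci0 E) (h1 : ci1 E) : M1 E ⊆ mMap E := by
  rintro ⟨I, J, K⟩ ⟨hIJ, hIK, hJK, hI, hJ, li, lj, -, -, rfl, rfl, hchain⟩
  refine ⟨hIJ, hIK, hJK, hI, hJ, ?_⟩
  have hcol : ∀ t : Fin lj.length,
      ElemIndep E (lj.get t) li.toFinset ((lj.take t).toFinset ∪ K) := fun t =>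
    elemIndep_of_chain hE h1 fun s => by
      simpa only [union_assoc] using ci0.mem_swap hE h0 (hchain s t)
  have hrow : ∀ i ∈ li.toFinset, ∀ A ⊆ li.toFinset.erase i,
      ElemIndep E i lj.toFinset (A ∪ K) := fun i hi A hA =>
    elemIndep_of_chain hE h1 fun t => by
      simpa only [union_left_comm] using ci0.mem_swap hE h0 (hcol t i hi A hA)
  intro i hi j hj M hKM hM
  have hsplit : M = M ∩ lj.toFinset.erase j ∪ (M ∩ li.toFinset.erase i ∪ K) := by
    ext x
    grind
  rw [hsplit]
  exact hrow i hi _ inter_subset_right j hj _ inter_subset_right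

end

theorem mMap_eq_M1_general (E : Set (V × V × Finset V))
    (hE : ∀ T ∈ E, T.1 ≠ T.2.1 ∧ T.1 ∉ T.2.2 ∧ T.2.1 ∉ T.2.2)
    (h0 : ci0 E) (h1 : ci1 E) :
    mMap E = M1 E :=
  mMap_subset_M1.antisymm (M1_subset_mMap hE h0 h1)

/-- If a set `E` of elementary triplets over a finite set `V` satisfies
ci0 and ci1 then `m(E) = M1`. -/
theorem mMap_eq_M1 [Fintype V] (E : Set (V × V × Finset V))
    (hE : ∀ T ∈ E, T.1 ≠ T.2.1 ∧ T.1 ∉ T.2.2 ∧ T.2.1 ∉ T.2.2)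
    (h0 : ci0 E) (h1 : ci1 E) :
    mMap E = M1 E :=
  mMap_eq_M1_general E hE h0 h1
end

section
/- Let V be a finite set and let E be a set of elementary triplets over V satisfying ci0, ci1 and ci2. Define M2 = { I⊥J|K : i⊥j | (I∖{i}) ∪ (J∖{j}) ∪ K ∈ E for all i ∈ I and j ∈ J }. Then m(E) = M2. -/
variable {V : Type*} [DecidableEq V]

/-- ci2: for all distinct `i j k` and `L ⊆ V \ {i, j, k}`,
`(i ⊥ j | {k} ∪ L ∈ E and i ⊥ k | {j} ∪ L ∈ E) → (i ⊥ j | L ∈ E and i ⊥ k | L ∈ E)`. -/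
def ci2 (E : Set (V × V × Finset V)) : Prop :=
  ∀ (i j k : V) (L : Finset V), i ≠ j → i ≠ k → j ≠ k → i ∉ L → j ∉ L → k ∉ L →
    ((i, j, insert k L) ∈ E ∧ (i, k, insert j L) ∈ E) →
      ((i, j, L) ∈ E ∧ (i, k, L) ∈ E)

/-- `M2`: the triplets `I ⊥ J | K` such that
`i ⊥ j | (I \ {i}) ∪ (J \ {j}) ∪ K ∈ E` for all `i ∈ I` and `j ∈ J`. -/
def M2 (E : Set (V × V × Finset V)) : Set (Finset V × Finset V × Finset V) :=
  { T | Disjoint T.1 T.2.1 ∧ Disjoint T.1 T.2.2 ∧ Disjoint T.2.1 T.2.2 ∧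
      T.1.Nonempty ∧ T.2.1.Nonempty ∧
      ∀ i ∈ T.1, ∀ j ∈ T.2.1,
        (i, j, T.1.erase i ∪ T.2.1.erase j ∪ T.2.2) ∈ E }

namespace ci2

variable {E : Set (V × V × Finset V)} {i j k : V} {L : Finset V}

/-- `ci2` with the shared index in the second slot, through the symmetry `ci0`. -/
lemma mem_of_mem_insert_of_mem_insert_left (h2 : ci2 E) (h0 : ci0 E)
    (hij : i ≠ j) (hik : i ≠ k) (hjk : j ≠ k) (hi : i ∉ L) (hj : j ∉ L) (hk : k ∉ L)
    (hijk : (i, j, insert k L) ∈ E) (hkji : (k, j, insert i L) ∈ E) : (i, j, L) ∈ E := by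
  rw [h0 i j L hij hi hj]
  refine (h2 j i k L hij.symm hjk hik hj hi hk ⟨?_, ?_⟩).1
  · rwa [← h0 i j _ hij (by simp [hik, hi]) (by simp [hjk, hj])]
  · rwa [← h0 k j _ hjk.symm (by simp [hik.symm, hk]) (by simp [hij.symm, hj])]

end ci2

section

variable {E : Set (V × V × Finset V)}

lemma mMap_subset_M2 : mMap E ⊆ M2 E :=
  fun _ ⟨hIJ, hIK, hJK, hI, hJ, hE⟩ =>
    ⟨hIJ, hIK, hJK, hI, hJ, fun i hi j hj => hE i hi j hj _ Finset.subset_union_right le_rfl⟩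

/-- Downward induction on `M`: a missing `k ∈ I ∪ J` is removed from the conditioning set
by `ci2` (or its mirror image), both premises being instances with a larger `M`. -/
lemma mem_of_mem_M2 (h0 : ci0 E) (h2 : ci2 E) {I J K : Finset V} (hT : (I, J, K) ∈ M2 E)
    {i j : V} (hi : i ∈ I) (hj : j ∈ J) {M : Finset V} (hKM : K ⊆ M) (hM : M ⊆ I ∪ J ∪ K)
    (hiM : i ∉ M) (hjM : j ∉ M) : (i, j, M) ∈ E := by
  have hIJ : ∀ x ∈ I, x ∉ J := fun _ hx => Finset.disjoint_left.mp hT.1 hx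
  have hij : i ≠ j := fun h => hIJ i hi (h ▸ hj)
  by_cases hgap : ∃ k ∈ I ∪ J, k ∉ M ∧ k ≠ i ∧ k ≠ j
  · obtain ⟨k, hk, hkM, hki, hkj⟩ := hgap
    have hins : (i, j, insert k M) ∈ E :=
      mem_of_mem_M2 h0 h2 hT hi hj (hKM.trans (Finset.subset_insert _ _))
        (Finset.insert_subset (by grind) hM) (by grind) (by grind)
    rcases Finset.mem_union.mp hk with hkI | hkJ
    · exact h2.mem_of_mem_insert_of_mem_insert_left h0 hij hki.symm hkj.symm hiM hjM hkM hins
        (mem_of_mem_M2 h0 h2 hT hkI hj (hKM.trans (Finset.subset_insert _ _))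
          (Finset.insert_subset (by grind) hM) (by grind) (by grind))
    · exact (h2 i j k M hij hki.symm hkj.symm hiM hjM hkM ⟨hins,
        mem_of_mem_M2 h0 h2 hT hi hkJ (hKM.trans (Finset.subset_insert _ _))
          (Finset.insert_subset (by grind) hM) (by grind) (by grind)⟩).1
  · convert hT.2.2.2.2.2 i hi j hj using 3
    ext x
    grind
termination_by ((I ∪ J ∪ K) \ M).card
decreasing_by
  all_goals
    rw [Finset.sdiff_insert]
    exact Finset.card_erase_lt_of_mem (by grind)

end

theorem mMap_eq_M2_general (E : Set (V × V × Finset V))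
    (h0 : ci0 E) (h2 : ci2 E) :
    mMap E = M2 E := by
  refine mMap_subset_M2.antisymm fun ⟨I, J, K⟩ hT => ?_
  obtain ⟨hIJ, hIK, hJK, hI, hJ, -⟩ := id hT
  refine ⟨hIJ, hIK, hJK, hI, hJ, fun i hi j hj M hKM hM => ?_⟩
  rw [Finset.disjoint_left] at hIJ hIK hJK
  exact mem_of_mem_M2 h0 h2 hT hi hj hKM (by grind) (by grind) (by grind)

/-- If a set `E` of elementary triplets over a finite set `V` satisfies
ci0, ci1 and ci2 then `m(E) = M2`. -/
theorem mMap_eq_M2 [Fintype V] (E : Set (V × V × Finset V))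
    (hE : ∀ T ∈ E, T.1 ≠ T.2.1 ∧ T.1 ∉ T.2.2 ∧ T.2.1 ∉ T.2.2)
    (h0 : ci0 E) (h1 : ci1 E) (h2 : ci2 E) :
    mMap E = M2 E :=
  mMap_eq_M2_general E h0 h2
end

section
/- Let V be a finite set and let E be a set of elementary triplets over V satisfying ci0, ci1 and ci3. Define M3 = { I⊥J|K : i⊥j|K ∈ E for all i ∈ I and j ∈ J }. Then m(E) = M3. -/
variable {V : Type*} [DecidableEq V]

/-- ci3: for all distinct `i j k` and `L ⊆ V \ {i, j, k}`,
`(i ⊥ j | L ∈ E and i ⊥ k | L ∈ E) → (i ⊥ j | {k} ∪ L ∈ E and i ⊥ k | {j} ∪ L ∈ E)`. -/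
def ci3 (E : Set (V × V × Finset V)) : Prop :=
  ∀ (i j k : V) (L : Finset V), i ≠ j → i ≠ k → j ≠ k → i ∉ L → j ∉ L → k ∉ L →
    ((i, j, L) ∈ E ∧ (i, k, L) ∈ E) →
      ((i, j, insert k L) ∈ E ∧ (i, k, insert j L) ∈ E)

/-- `M3`: the triplets `I ⊥ J | K` such that `i ⊥ j | K ∈ E` for all `i ∈ I`, `j ∈ J`. -/
def M3 (E : Set (V × V × Finset V)) : Set (Finset V × Finset V × Finset V) :=
  { T | Disjoint T.1 T.2.1 ∧ Disjoint T.1 T.2.2 ∧ Disjoint T.2.1 T.2.2 ∧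
      T.1.Nonempty ∧ T.2.1.Nonempty ∧
      ∀ i ∈ T.1, ∀ j ∈ T.2.1, (i, j, T.2.2) ∈ E }

/-!
Write a conditioning set `M'` with `K ⊆ M' ⊆ (I \ {i}) ∪ (J \ {j}) ∪ K` as `A ∪ K` with
`A ⊆ I ∪ J` avoiding `i` and `j`, and add the elements of `A` one at a time. Adding `k ∈ J` to
the conditioning set of `i ⊥ j | L` is ci3 applied to `i ⊥ j | L` and `i ⊥ k | L`, both known by
induction; adding `k ∈ I` is the same step with the roles of `i` and `j` exchanged by ci0.
-/

section

open Finset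

variable {E : Set (V × V × Finset V)} {I J K : Finset V}

theorem mem_union_of_forall_mem_of_ci0_of_ci3 (h0 : ci0 E) (h3 : ci3 E)
    (hIJ : Disjoint I J) (hIK : Disjoint I K) (hJK : Disjoint J K)
    (hE : ∀ i ∈ I, ∀ j ∈ J, (i, j, K) ∈ E) (A : Finset V) (hA : A ⊆ I ∪ J) :
    ∀ i ∈ I, i ∉ A → ∀ j ∈ J, j ∉ A → (i, j, A ∪ K) ∈ E := by
  induction A using Finset.induction_on with
  | empty => simpa using hE
  | insert k A hkA ih =>
    intro i hi hiA j hj hjA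
    rw [insert_subset_iff] at hA
    rw [mem_insert, not_or] at hiA hjA
    specialize ih hA.2
    have hnot {x} (hxA : x ∉ A) (hxK : x ∉ K) : x ∉ A ∪ K := by simp [hxA, hxK]
    have hiL := hnot hiA.2 (disjoint_left.mp hIK hi)
    have hjL := hnot hjA.2 (disjoint_left.mp hJK hj)
    have hij : i ≠ j := ne_of_mem_of_not_mem hi (disjoint_right.mp hIJ hj)
    rw [insert_union]
    rcases mem_union.mp hA.1 with hkI | hkJ
    · have hkL := hnot hkA (disjoint_left.mp hIK hkI)
      have hkj : k ≠ j := ne_of_mem_of_not_mem hkI (disjoint_right.mp hIJ hj)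
      have hji := (h0 i j _ hij hiL hjL).mp (ih i hi hiA.2 j hj hjA.2)
      have hjk := (h0 k j _ hkj hkL hjL).mp (ih k hkI hkA j hj hjA.2)
      have := (h3 j i k _ hij.symm hjA.1 hiA.1 hjL hiL hkL ⟨hji, hjk⟩).1
      exact (h0 j i _ hij.symm (by simp [hjA.1, hjL]) (by simp [hiA.1, hiL])).mp this
    · have hkL := hnot hkA (disjoint_left.mp hJK hkJ)
      have hik : i ≠ k := ne_of_mem_of_not_mem hi (disjoint_right.mp hIJ hkJ)
      exact (h3 i j k _ hij hik hjA.1 hiL hjL hkL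
        ⟨ih i hi hiA.2 j hj hjA.2, ih i hi hiA.2 k hkJ hkA⟩).1

end

open Finset in
theorem mMap_eq_M3_general (E : Set (V × V × Finset V))
    (h0 : ci0 E) (h3 : ci3 E) :
    mMap E = M3 E := by
  ext ⟨I, J, K⟩
  simp only [mMap, M3, Set.mem_ofPred_eq]
  refine and_congr_right fun hIJ => and_congr_right fun hIK => and_congr_right fun hJK =>
    and_congr_right fun _ => and_congr_right fun _ => ⟨?_, ?_⟩
  · exact fun h i hi j hj => h i hi j hj K subset_rfl subset_union_right
  · intro hE i hi j hj M' hKM hM'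
    have hM'K : M' \ K ⊆ I.erase i ∪ J.erase j := fun x hx =>
      (mem_union.mp (hM' (mem_sdiff.mp hx).1)).resolve_right (mem_sdiff.mp hx).2
    have hiM' : i ∉ M' \ K := fun h => (mem_union.mp (hM'K h)).elim (notMem_erase i I)
      fun h => disjoint_left.mp hIJ hi (mem_of_mem_erase h)
    have hjM' : j ∉ M' \ K := fun h => (mem_union.mp (hM'K h)).elim
      (fun h => disjoint_left.mp hIJ (mem_of_mem_erase h) hj) (notMem_erase j J)
    rw [← sdiff_union_of_subset hKM]
    exact mem_union_of_forall_mem_of_ci0_of_ci3 h0 h3 hIJ hIK hJK hE (M' \ K)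
      (hM'K.trans (union_subset_union (erase_subset _ _) (erase_subset _ _))) i hi hiM' j hj hjM'

/-- If a set `E` of elementary triplets over a finite set `V` satisfies
ci0, ci1 and ci3 then `m(E) = M3`. -/
theorem mMap_eq_M3 [Fintype V] (E : Set (V × V × Finset V))
    (hE : ∀ T ∈ E, T.1 ≠ T.2.1 ∧ T.1 ∉ T.2.2 ∧ T.2.1 ∉ T.2.2)
    (h0 : ci0 E) (h1 : ci1 E) (h3 : ci3 E) :
    mMap E = M3 E :=
  mMap_eq_M3_general E h0 h3
end
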